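/- Let 𝕜 be a commutative ring, k ≥ 2, and R = 𝕜[x_1,…,x_k]/(x_1x_2⋯x_k). Fix 2 ≤ i ≤ k and 1 ≤ j ≤ k, and let π : R/(x_{[1,i]}) → R/(x_{[1,i−1]}) be the canonical surjection. Consider the R-linear map Hom_R(R/(x_{[1,i−1]}), R/(x_{[1,j]})) → Hom_R(R/(x_{[1,i]}), R/(x_{[1,j]})) given by precomposition with π. Then its cokernel is isomorphic, as an R-module, to R/(x_i) if j ≥ i, and is zero if j < i. -/

import Mathlib

open MvPolynomial

/-- The ring `R = 𝕜[x₁,…,x_k]/(x₁x₂⋯x_k)`, with variables indexed by `Fin k`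
(the variable `x_m` of the paper, `1 ≤ m ≤ k`, corresponds to `m - 1 : Fin k`). -/
abbrev NodalRing (𝕜 : Type*) [CommRing 𝕜] (k : ℕ) : Type _ :=
  MvPolynomial (Fin k) 𝕜 ⧸
    Ideal.span {∏ i : Fin k, (X i : MvPolynomial (Fin k) 𝕜)}

/-- `x_{[a,b]}`: the image in `R` of the monomial `∏_{a ≤ m ≤ b} x_m`
(an empty product is `1`). -/
noncomputable def xIcc (𝕜 : Type*) [CommRing 𝕜] (k a b : ℕ) : NodalRing 𝕜 k :=
  Ideal.Quotient.mk _
    (∏ t ∈ Finset.univ.filter (fun t : Fin k => a ≤ (t : ℕ) + 1 ∧ (t : ℕ) + 1 ≤ b),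
      X t)

/-!
A map `R/(b) → R/(c)` is determined by the image of `1`, which must be killed by `b`.
With `b = a·x` and `c = b·y`, these maps are the multiplications by multiples `r·y` of `y`,
since `(c : b) = (y)`; such a map factors through `R/(a)` iff `a·r·y ∈ (c)`, i.e. iff
`r ∈ (x)`. Hence `r ↦ [r·y]` identifies the cokernel with `R/(x)`. For the nodal ring
`x = x_i`, `a = x_{[1,i-1]}`, `y = x_{[i+1,j]}`, and both colon ideals are computed in the
polynomial ring, where monomials are nonzerodivisors and `c` divides `x₁⋯x_k`.
If `j < i`, then `x_{[1,j]}` divides `x_{[1,i-1]}`, so every map already factors.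
-/

section QuotientMaps

variable {A : Type*} [CommRing A] {N : Type*} [AddCommGroup N] [Module A N]

theorem quotient_linearMap_ext {I : Ideal A} {f g : (A ⧸ I) →ₗ[A] N}
    (h : f (Submodule.Quotient.mk 1) = g (Submodule.Quotient.mk 1)) : f = g := by
  ext
  exact h

theorem quotient_linearMap_apply_mk {I : Ideal A} (f : (A ⧸ I) →ₗ[A] N) (r : A) :
    f (Submodule.Quotient.mk r) = r • f (Submodule.Quotient.mk 1) := by
  rw [← map_smul, ← Submodule.Quotient.mk_smul, smul_eq_mul, mul_one]

theorem quotient_mk_eq_zero_iff_dvd {c u : A} :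
    (Submodule.Quotient.mk u : A ⧸ Ideal.span {c}) = 0 ↔ c ∣ u := by
  rw [Submodule.Quotient.mk_eq_zero, Ideal.mem_span_singleton]

noncomputable def quotMulMap {b c : A} (y : A) (h : c ∣ b * y) :
    (A ⧸ Ideal.span {b}) →ₗ[A] (A ⧸ Ideal.span {c}) :=
  (Ideal.span {b}).liftQ (LinearMap.toSpanSingleton A _ (Submodule.Quotient.mk y)) <| by
    rw [Ideal.span, Submodule.span_singleton_le_iff_mem, LinearMap.mem_ker,
      LinearMap.toSpanSingleton_apply, ← Submodule.Quotient.mk_smul, smul_eq_mul,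
      quotient_mk_eq_zero_iff_dvd]
    exact h

theorem quotMulMap_mk {b c : A} (y : A) (h : c ∣ b * y) (r : A) :
    quotMulMap y h (Submodule.Quotient.mk r) = Submodule.Quotient.mk (r * y) := rfl

theorem lcomp_factor_surjective {I J : Ideal A} (hIJ : I ≤ J)
    (hJ : J ≤ Module.annihilator A N) :
    Function.Surjective (LinearMap.lcomp A N (Submodule.factor hIJ)) := by
  intro ψ
  refine ⟨J.liftQ (ψ ∘ₗ I.mkQ) fun a ha => ?_, quotient_linearMap_ext rfl⟩
  rw [LinearMap.mem_ker, LinearMap.comp_apply, Submodule.mkQ_apply, quotient_linearMap_apply_mk]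
  exact Module.mem_annihilator.mp (hJ ha) _

theorem nonempty_cokernel_lcomp_factor_equiv {a x y b c : A} (hb : a * x = b) (hc : b * y = c)
    (hle : Ideal.span {b} ≤ Ideal.span {a})
    (hy : ∀ u, c ∣ b * u → y ∣ u) (hx : ∀ r, c ∣ a * y * r → x ∣ r) :
    Nonempty ((((A ⧸ Ideal.span {b}) →ₗ[A] (A ⧸ Ideal.span {c})) ⧸
        LinearMap.range (LinearMap.lcomp A (A ⧸ Ideal.span {c}) (Submodule.factor hle)))
      ≃ₗ[A] A ⧸ Ideal.span {x}) := by
  set T := LinearMap.lcomp A (A ⧸ Ideal.span {c}) (Submodule.factor hle)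
  set e := quotMulMap y hc.symm.dvd
  set F := (LinearMap.range T).mkQ ∘ₗ LinearMap.toSpanSingleton A _ e
  have hF_apply : ∀ r, F r = Submodule.Quotient.mk (r • e) := fun _ => rfl
  have hF : Function.Surjective F := by
    intro φ
    obtain ⟨φ, rfl⟩ := Submodule.mkQ_surjective _ φ
    obtain ⟨u, hu⟩ := Submodule.Quotient.mk_surjective _ (φ (Submodule.Quotient.mk 1))
    obtain ⟨s, rfl⟩ : y ∣ u := hy u <| by
      rw [← quotient_mk_eq_zero_iff_dvd, ← smul_eq_mul, Submodule.Quotient.mk_smul, hu,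
        ← quotient_linearMap_apply_mk, quotient_mk_eq_zero_iff_dvd.mpr dvd_rfl, map_zero]
    refine ⟨s, congrArg _ (quotient_linearMap_ext ?_)⟩
    rw [LinearMap.toSpanSingleton_apply, LinearMap.smul_apply, quotMulMap_mk, ← hu,
      ← Submodule.Quotient.mk_smul, smul_eq_mul, one_mul, mul_comm]
  have hker : LinearMap.ker F = Ideal.span {x} := by
    apply le_antisymm
    · intro r hr
      rw [LinearMap.mem_ker, hF_apply, Submodule.Quotient.mk_eq_zero] at hr
      obtain ⟨ψ, hψ⟩ := hr
      rw [Ideal.mem_span_singleton]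
      refine hx r (quotient_mk_eq_zero_iff_dvd.mp ?_)
      calc (Submodule.Quotient.mk (a * y * r) : A ⧸ Ideal.span {c})
          = a • (r • e) (Submodule.Quotient.mk 1) := by
            rw [LinearMap.smul_apply, quotMulMap_mk, ← Submodule.Quotient.mk_smul,
              ← Submodule.Quotient.mk_smul, smul_eq_mul, smul_eq_mul, one_mul, mul_assoc,
              mul_comm y]
        _ = a • ψ (Submodule.Quotient.mk 1) := by rw [← hψ]; rfl
        _ = 0 := by
          rw [← quotient_linearMap_apply_mk, quotient_mk_eq_zero_iff_dvd.mpr dvd_rfl, map_zero]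
    · rw [Ideal.span_le, Set.singleton_subset_iff, SetLike.mem_coe, LinearMap.mem_ker,
        hF_apply, Submodule.Quotient.mk_eq_zero]
      refine ⟨quotMulMap (x * y) (by rw [← mul_assoc, hb, hc]), quotient_linearMap_ext ?_⟩
      rw [LinearMap.smul_apply, quotMulMap_mk, ← Submodule.Quotient.mk_smul, smul_eq_mul]
      change Submodule.Quotient.mk (1 * (x * y)) = _
      rw [one_mul, one_mul]
  exact ⟨(F.quotKerEquivOfSurjective hF).symm.trans (Submodule.quotEquivOfEq _ _ hker)⟩

theorem Ideal.Quotient.mk_dvd_of_mul_dvd_mul_left {m p q : A}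
    (hp : IsLeftRegular p) (hm : p * q ∣ m) {u : A ⧸ Ideal.span {m}}
    (h : Ideal.Quotient.mk _ (p * q) ∣ Ideal.Quotient.mk _ p * u) :
    Ideal.Quotient.mk _ q ∣ u := by
  obtain ⟨u, rfl⟩ := Ideal.Quotient.mk_surjective u
  obtain ⟨t, ht⟩ := h
  obtain ⟨t, rfl⟩ := Ideal.Quotient.mk_surjective t
  rw [← map_mul, ← map_mul, Ideal.Quotient.eq, Ideal.mem_span_singleton] at ht
  have hqu : q ∣ u - q * t := hp.dvd_cancel_left.mp <| by
    rw [mul_sub, ← mul_assoc]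
    exact hm.trans ht
  exact map_dvd _ ((dvd_sub_left (dvd_mul_right q t)).mp hqu)

end QuotientMaps

section Nodal

variable {𝕜 : Type*} [CommRing 𝕜] {k : ℕ}

variable (𝕜 k) in
noncomputable def xIccPoly (a b : ℕ) : MvPolynomial (Fin k) 𝕜 :=
  ∏ t ∈ Finset.univ.filter (fun t : Fin k => a ≤ (t : ℕ) + 1 ∧ (t : ℕ) + 1 ≤ b), X t

theorem xIcc_eq_mk (a b : ℕ) : xIcc 𝕜 k a b = Ideal.Quotient.mk _ (xIccPoly 𝕜 k a b) := rfl

theorem isRegular_xIccPoly (a b : ℕ) : IsRegular (xIccPoly 𝕜 k a b) :=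
  isRegular_prod_X _

theorem xIccPoly_dvd_prod_X (a b : ℕ) : xIccPoly 𝕜 k a b ∣ ∏ t, X t :=
  Finset.prod_dvd_prod_of_subset _ _ _ (Finset.subset_univ _)

theorem xIccPoly_mul {a b c : ℕ} (hab : a ≤ b + 1) (hbc : b ≤ c) :
    xIccPoly 𝕜 k a b * xIccPoly 𝕜 k (b + 1) c = xIccPoly 𝕜 k a c := by
  rw [xIccPoly, xIccPoly, xIccPoly, ← Finset.prod_union]
  · congr 1
    ext t
    simp only [Finset.mem_union, Finset.mem_filter, Finset.mem_univ, true_and]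
    omega
  · rw [Finset.disjoint_filter]
    omega

theorem xIccPoly_self {i : ℕ} (hi : 1 ≤ i) (hik : i ≤ k) :
    xIccPoly 𝕜 k i i = X ⟨i - 1, by omega⟩ := by
  rw [xIccPoly, ← Finset.prod_singleton X (⟨i - 1, by omega⟩ : Fin k)]
  congr 1
  ext t
  simp only [Finset.mem_filter, Finset.mem_univ, true_and, Finset.mem_singleton, Fin.ext_iff]
  omega

theorem xIccPoly_pred_mul_X {a i : ℕ} (hai : a ≤ i) (hi : 1 ≤ i) (hik : i ≤ k) :
    xIccPoly 𝕜 k a (i - 1) * X ⟨i - 1, by omega⟩ = xIccPoly 𝕜 k a i := by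
  have hsplit : xIccPoly 𝕜 k a (i - 1) * xIccPoly 𝕜 k (i - 1 + 1) i = xIccPoly 𝕜 k a i :=
    xIccPoly_mul (by omega) (by omega)
  rw [Nat.sub_add_cancel hi] at hsplit
  rw [← hsplit, xIccPoly_self hi hik]

theorem mk_dvd_of_xIcc_dvd_mk_mul {a b : ℕ} {p q : MvPolynomial (Fin k) 𝕜} (hp : IsRegular p)
    (hpq : p * q = xIccPoly 𝕜 k a b) {u : NodalRing 𝕜 k}
    (h : xIcc 𝕜 k a b ∣ Ideal.Quotient.mk _ p * u) : Ideal.Quotient.mk _ q ∣ u :=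
  Ideal.Quotient.mk_dvd_of_mul_dvd_mul_left hp.left (hpq ▸ xIccPoly_dvd_prod_X a b)
    (by rwa [hpq])

theorem xIcc_dvd_xIcc {a b c : ℕ} (hbc : b ≤ c) : xIcc 𝕜 k a b ∣ xIcc 𝕜 k a c := by
  refine map_dvd _ (Finset.prod_dvd_prod_of_subset _ _ _ fun t => ?_)
  simp only [Finset.mem_filter, Finset.mem_univ, true_and]
  omega

end Nodal

/-- **Components `(P̄_i)_{[1,j]}` of the modules `P̄_i`.**
For `2 ≤ i ≤ k` and `1 ≤ j ≤ k`, the cokernel of precomposition with the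
canonical projection `π : R/(x_{[1,i]}) → R/(x_{[1,i-1]})`, as a map
`Hom_R(R/(x_{[1,i-1]}), R/(x_{[1,j]})) → Hom_R(R/(x_{[1,i]}), R/(x_{[1,j]}))`,
is isomorphic to `R/(x_i)` if `j ≥ i`, and is zero if `j < i`. -/
theorem stmt_12 (𝕜 : Type*) [CommRing 𝕜] (k : ℕ)
    (i j : ℕ) (hi : 2 ≤ i) (hik : i ≤ k) :
    ∃ (π : (NodalRing 𝕜 k ⧸ Ideal.span {xIcc 𝕜 k 1 i}) →ₗ[NodalRing 𝕜 k]
          (NodalRing 𝕜 k ⧸ Ideal.span {xIcc 𝕜 k 1 (i - 1)}))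
      (T : ((NodalRing 𝕜 k ⧸ Ideal.span {xIcc 𝕜 k 1 (i - 1)}) →ₗ[NodalRing 𝕜 k]
              (NodalRing 𝕜 k ⧸ Ideal.span {xIcc 𝕜 k 1 j})) →ₗ[NodalRing 𝕜 k]
           ((NodalRing 𝕜 k ⧸ Ideal.span {xIcc 𝕜 k 1 i}) →ₗ[NodalRing 𝕜 k]
              (NodalRing 𝕜 k ⧸ Ideal.span {xIcc 𝕜 k 1 j}))),
      (∀ s : NodalRing 𝕜 k,
        π (Submodule.Quotient.mk s) = Submodule.Quotient.mk s) ∧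
      (∀ φ, T φ = φ.comp π) ∧
      (i ≤ j → Nonempty
        (((((NodalRing 𝕜 k ⧸ Ideal.span {xIcc 𝕜 k 1 i}) →ₗ[NodalRing 𝕜 k]
              (NodalRing 𝕜 k ⧸ Ideal.span {xIcc 𝕜 k 1 j})) ⧸ LinearMap.range T))
          ≃ₗ[NodalRing 𝕜 k]
          (NodalRing 𝕜 k ⧸
            Ideal.span {(Ideal.Quotient.mk _ (X (⟨i - 1, by omega⟩ : Fin k)) :
              NodalRing 𝕜 k)}))) ∧
      (j < i → Function.Surjective T) := by
  have hb : xIcc 𝕜 k 1 (i - 1) * Ideal.Quotient.mk _ (X ⟨i - 1, by omega⟩) = xIcc 𝕜 k 1 i := by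
    rw [xIcc_eq_mk, xIcc_eq_mk, ← map_mul, xIccPoly_pred_mul_X (by omega) (by omega) hik]
  have hle : Ideal.span {xIcc 𝕜 k 1 i} ≤ Ideal.span {xIcc 𝕜 k 1 (i - 1)} :=
    Ideal.span_singleton_le_span_singleton.mpr ⟨_, hb.symm⟩
  refine ⟨Submodule.factor hle, LinearMap.lcomp _ _ (Submodule.factor hle), fun _ => rfl,
    fun _ => rfl, fun hij => ?_, fun hji => ?_⟩
  · have hprod : xIccPoly 𝕜 k 1 i * xIccPoly 𝕜 k (i + 1) j = xIccPoly 𝕜 k 1 j :=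
      xIccPoly_mul (by omega) hij
    have hprod' : xIccPoly 𝕜 k 1 (i - 1) * xIccPoly 𝕜 k (i + 1) j * X ⟨i - 1, by omega⟩ =
        xIccPoly 𝕜 k 1 j := by
      rw [mul_right_comm, xIccPoly_pred_mul_X (by omega) (by omega) hik, hprod]
    refine nonempty_cokernel_lcomp_factor_equiv hb
      (by rw [xIcc_eq_mk, xIcc_eq_mk, ← map_mul, hprod]) hle (fun u hu => ?_) (fun r hr => ?_)
    · exact mk_dvd_of_xIcc_dvd_mk_mul (isRegular_xIccPoly 1 i) hprod hu
    · refine mk_dvd_of_xIcc_dvd_mk_mul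
        ((isRegular_xIccPoly 1 (i - 1)).mul (isRegular_xIccPoly (i + 1) j)) hprod' ?_
      rwa [map_mul]
  · refine lcomp_factor_surjective hle ?_
    rw [Ideal.annihilator_quotient, Ideal.span_singleton_le_span_singleton]
    exact xIcc_dvd_xIcc (by omega)
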